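/- arXiv:nlin/0312002 — 2 statements merged into one kernel-verified Lean document; each statement's English description precedes it below -/
import Mathlib

section
/- Every entire twisted doubly periodic matrix-valued function is a constant scalar multiple of the identity: if X : ℂ → Matrix (Fin 2) (Fin 2) ℂ is holomorphic on all of ℂ and satisfies X(z + 2ω_a) = σ_a · X(z) · σ_a for a = 1, 2, 3 and all z ∈ ℂ, then there exists c ∈ ℂ such that X(z) = c • 1 for all z ∈ ℂ. -/
noncomputable section

open Filter Topology

attribute [local instance] Matrix.normedAddCommGroup Matrix.normedSpace

/-- The Pauli matrix σ₁. -/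
def σ1 : Matrix (Fin 2) (Fin 2) ℂ := !![0, 1; 1, 0]

/-- The Pauli matrix σ₂. -/
def σ2 : Matrix (Fin 2) (Fin 2) ℂ := !![0, -Complex.I; Complex.I, 0]

/-- The Pauli matrix σ₃. -/
def σ3 : Matrix (Fin 2) (Fin 2) ℂ := !![1, 0; 0, -1]

/-- The period lattice Λ = 2ω₁ℤ + 2ω₃ℤ. -/
def lattice (ω₁ ω₃ : ℂ) : Set ℂ :=
  {z | ∃ m n : ℤ, z = 2 * (m : ℂ) * ω₁ + 2 * (n : ℂ) * ω₃}

/-- Twisted double periodicity on a set `S`: `X (z + 2ω_a) = σ_a * X z * σ_a` for `a = 1,2,3`,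
with `ω₂ = -ω₁ - ω₃`. -/
def TwistedPeriodicOn (ω₁ ω₃ : ℂ) (S : Set ℂ)
    (X : ℂ → Matrix (Fin 2) (Fin 2) ℂ) : Prop :=
  (∀ z ∈ S, X (z + 2 * ω₁) = σ1 * X z * σ1) ∧
  (∀ z ∈ S, X (z + 2 * (-ω₁ - ω₃)) = σ2 * X z * σ2) ∧
  (∀ z ∈ S, X (z + 2 * ω₃) = σ3 * X z * σ3)

/-- The vacuum point `W₀`: functions holomorphic on `ℂ ∖ Λ` and twisted doubly periodic there. -/
def W0 (ω₁ ω₃ : ℂ) : Set (ℂ → Matrix (Fin 2) (Fin 2) ℂ) :=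
  {X | DifferentiableOn ℂ X (lattice ω₁ ω₃)ᶜ ∧
       TwistedPeriodicOn ω₁ ω₃ (lattice ω₁ ω₃)ᶜ X}

/-!
Since `σ₁² = σ₃² = 1`, applying the twisted periodicity twice shows that `X` is genuinely periodic
with periods `4ω₁` and `4ω₃`. These span a lattice in `ℂ`, so the continuous function `X` takes
all its values on a compact fundamental domain and is bounded; by Liouville it is a constant
matrix `A`. Finally `σ₃ A σ₃ = A` kills the off-diagonal entries and `σ₁ A σ₁ = A` equates the
diagonal ones.
-/

open Function Module

theorem Function.periodic_add_self_of_apply_add_eq_conj {α R : Type*} [AddSemigroup α]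
    [Monoid R] {s : R} (hs : s * s = 1) {X : α → R} {p : α}
    (h : ∀ z, X (z + p) = s * X z * s) : Periodic X (p + p) := fun z => by
  rw [← add_assoc, h, h, ← mul_assoc, ← mul_assoc, hs, one_mul, mul_assoc, hs, mul_one]

theorem Module.Basis.isCompact_range_of_periodic {E F ι : Type*} [NormedAddCommGroup E]
    [NormedSpace ℝ E] [FiniteDimensional ℝ E] [Finite ι] [TopologicalSpace F]
    (b : Basis ι ℝ E) {f : E → F} (hf : Continuous f) (hper : ∀ i, Periodic f (b i)) :
    IsCompact (Set.range f) :=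
  IsZLattice.isCompact_range_of_periodic (Submodule.span ℤ (Set.range b)) f hf fun z w hw => by
    induction hw using Submodule.span_induction generalizing z with
    | mem w hw => obtain ⟨i, rfl⟩ := hw; exact hper i z
    | zero => rw [add_zero]
    | add v w _ _ hv hw => rw [← add_assoc, hw, hv]
    | smul n w _ hw => exact Periodic.zsmul (fun z => hw z) n z

theorem σ1_mul_self : σ1 * σ1 = 1 := by simp [σ1, Matrix.one_fin_two]

theorem σ3_mul_self : σ3 * σ3 = 1 := by simp [σ3, Matrix.one_fin_two]

theorem eq_smul_one_of_conj_σ1_of_conj_σ3 {A : Matrix (Fin 2) (Fin 2) ℂ}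
    (h1 : σ1 * A * σ1 = A) (h3 : σ3 * A * σ3 = A) : A = A 0 0 • 1 := by
  rw [Matrix.eta_fin_two A] at h1 h3 ⊢
  simp [σ1, σ3, Matrix.one_fin_two] at h1 h3 ⊢
  grind

theorem entire_twisted_periodic_eq_scalar_general (ω₁ ω₃ : ℂ)
    (hind : LinearIndependent ℝ ![ω₁, ω₃])
    (X : ℂ → Matrix (Fin 2) (Fin 2) ℂ) (hX : Differentiable ℂ X)
    (h1 : ∀ z : ℂ, X (z + 2 * ω₁) = σ1 * X z * σ1)
    (h3 : ∀ z : ℂ, X (z + 2 * ω₃) = σ3 * X z * σ3) :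
    ∃ c : ℂ, ∀ z : ℂ, X z = c • (1 : Matrix (Fin 2) (Fin 2) ℂ) := by
  let b := (basisOfLinearIndependentOfCardEqFinrank hind (by simp)).isUnitSMul
    (w := fun _ => (4 : ℝ)) fun _ => by norm_num
  have hb₁ : b 0 = 2 * ω₁ + 2 * ω₁ := by
    rw [Basis.isUnitSMul_apply, coe_basisOfLinearIndependentOfCardEqFinrank, Complex.real_smul,
      Matrix.cons_val_zero, Complex.ofReal_ofNat]
    ring
  have hb₃ : b 1 = 2 * ω₃ + 2 * ω₃ := by
    rw [Basis.isUnitSMul_apply, coe_basisOfLinearIndependentOfCardEqFinrank, Complex.real_smul,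
      Matrix.cons_val_one, Matrix.cons_val_fin_one, Complex.ofReal_ofNat]
    ring
  have hper : ∀ i, Periodic X (b i) := Fin.forall_fin_two.2
    ⟨hb₁ ▸ periodic_add_self_of_apply_add_eq_conj σ1_mul_self h1,
      hb₃ ▸ periodic_add_self_of_apply_add_eq_conj σ3_mul_self h3⟩
  obtain ⟨A, hA⟩ := hX.exists_const_forall_eq_of_bounded
    (b.isCompact_range_of_periodic hX.continuous hper).isBounded
  refine ⟨A 0 0, fun z => (hA z).trans (eq_smul_one_of_conj_σ1_of_conj_σ3 ?_ ?_)⟩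
  · rw [← hA 0, ← h1, hA, hA]
  · rw [← hA 0, ← h3, hA, hA]

/-- every entire twisted doubly periodic matrix-valued function is a constant
scalar multiple of the identity. -/
theorem entire_twisted_periodic_eq_scalar (ω₁ ω₃ : ℂ)
    (hind : LinearIndependent ℝ ![ω₁, ω₃])
    (X : ℂ → Matrix (Fin 2) (Fin 2) ℂ) (hX : Differentiable ℂ X)
    (h1 : ∀ z : ℂ, X (z + 2 * ω₁) = σ1 * X z * σ1)
    (h2 : ∀ z : ℂ, X (z + 2 * (-ω₁ - ω₃)) = σ2 * X z * σ2)
    (h3 : ∀ z : ℂ, X (z + 2 * ω₃) = σ3 * X z * σ3) :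
    ∃ c : ℂ, ∀ z : ℂ, X z = c • (1 : Matrix (Fin 2) (Fin 2) ℂ) :=
  entire_twisted_periodic_eq_scalar_general ω₁ ω₃ hind X hX h1 h3
end
end

section
/- (Lemma 1, part (i): Ker(W₀ → V/V₊) = {0}.) If X ∈ W₀, i.e. X : ℂ → Matrix (Fin 2) (Fin 2) ℂ is holomorphic on ℂ ∖ Λ and twisted doubly periodic there, and X(z) → 0 as z → 0 along ℂ ∖ Λ, then X(z) = 0 for all z ∈ ℂ ∖ Λ. -/
noncomputable section

open Filter Topology

attribute [local instance] Matrix.normedAddCommGroup Matrix.normedSpace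

/-!
Extend `X` by `0` on `Λ`. Conjugation by `σ₁` and `σ₃` preserves the entrywise sup norm, so the
norm of the extension is `Λ`-periodic. Hence the extension tends to `0` at every lattice point,
is entire by the removable singularity theorem, and is bounded since its norm takes all its values
on a compact fundamental domain. By Liouville's theorem it is constant, equal to its value `0` at
the origin.
-/

open Function Bornology

lemma norm_mul_mul_eq_of_mul_self_eq_one {A : Type*} [Ring A] [Norm A] {s : A} (hs : s * s = 1)
    (hle : ∀ M : A, ‖s * M * s‖ ≤ ‖M‖) (M : A) : ‖s * M * s‖ = ‖M‖ := by
  refine le_antisymm (hle M) ?_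
  calc ‖M‖ = ‖s * (s * M * s) * s‖ := by
        rw [show s * (s * M * s) * s = (s * s) * M * (s * s) by noncomm_ring, hs, one_mul, mul_one]
    _ ≤ ‖s * M * s‖ := hle _

lemma σ1_mul_mul_σ1 (M : Matrix (Fin 2) (Fin 2) ℂ) :
    σ1 * M * σ1 = !![M 1 1, M 1 0; M 0 1, M 0 0] := by
  rw [σ1, M.eta_fin_two]; simp

lemma σ3_mul_mul_σ3 (M : Matrix (Fin 2) (Fin 2) ℂ) :
    σ3 * M * σ3 = !![M 0 0, -M 0 1; -M 1 0, M 1 1] := by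
  rw [σ3, M.eta_fin_two]; simp

lemma norm_σ1_mul_mul_σ1 (M : Matrix (Fin 2) (Fin 2) ℂ) : ‖σ1 * M * σ1‖ = ‖M‖ := by
  refine norm_mul_mul_eq_of_mul_self_eq_one ?_ (fun M => ?_) M
  · simpa [← Matrix.one_fin_two] using σ1_mul_mul_σ1 1
  · rw [σ1_mul_mul_σ1, Matrix.norm_le_iff (norm_nonneg M)]
    intro i j
    fin_cases i <;> fin_cases j <;> simp [Matrix.norm_entry_le_entrywise_sup_norm]

lemma norm_σ3_mul_mul_σ3 (M : Matrix (Fin 2) (Fin 2) ℂ) : ‖σ3 * M * σ3‖ = ‖M‖ := by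
  refine norm_mul_mul_eq_of_mul_self_eq_one ?_ (fun M => ?_) M
  · simpa [← Matrix.one_fin_two] using σ3_mul_mul_σ3 1
  · rw [σ3_mul_mul_σ3, Matrix.norm_le_iff (norm_nonneg M)]
    intro i j
    fin_cases i <;> fin_cases j <;> simp [Matrix.norm_entry_le_entrywise_sup_norm]

lemma tendsto_indicator_compl_nhds_zero {α E : Type*} [TopologicalSpace α] [TopologicalSpace E]
    [Zero E] {s : Set α} {f : α → E} {a : α}
    (h : Tendsto f (𝓝[sᶜ] a) (𝓝 0)) : Tendsto (sᶜ.indicator f) (𝓝 a) (𝓝 0) := by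
  rw [← nhdsWithin_univ, ← Set.compl_union_self s, nhdsWithin_union, tendsto_sup]
  constructor
  · exact h.congr' (eventuallyEq_nhdsWithin_of_eqOn (Set.eqOn_indicator).symm)
  · exact tendsto_const_nhds.congr' (eventuallyEq_nhdsWithin_of_eqOn fun z hz =>
      (Set.indicator_of_notMem (Set.notMem_compl_iff.2 hz) f).symm)

lemma Function.Periodic.norm_indicator_compl {G E S : Type*} [AddGroup G] [NormedAddCommGroup E]
    [SetLike S G] [AddSubgroupClass S G] {L : S} {f : G → E} {c : G} (hc : c ∈ L)
    (hf : ∀ z ∉ L, ‖f (z + c)‖ = ‖f z‖) :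
    Periodic (fun z => ‖(L : Set G)ᶜ.indicator f z‖) c := by
  intro z
  by_cases hz : z ∈ L
  · simp [hz, add_mem hz hc]
  · have hzc : z + c ∉ L := fun h => hz (by simpa using sub_mem h hc)
    simp [hz, hzc, hf z hz]

lemma Function.Periodic.tendsto_zero_of_norm {G E : Type*} [SeminormedAddCommGroup G]
    [SeminormedAddCommGroup E] {f : G → E} {c : G} (hf : Periodic (fun z => ‖f z‖) c)
    (h0 : Tendsto f (𝓝 0) (𝓝 0)) : Tendsto f (𝓝 c) (𝓝 0) := by
  have hsub : Tendsto (fun z => z - c) (𝓝 c) (𝓝 0) := by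
    simpa using (continuous_sub_right c).tendsto c
  rw [tendsto_zero_iff_norm_tendsto_zero] at h0 ⊢
  exact (h0.comp hsub).congr hf.sub_eq

lemma IsZLattice.isBounded_range_of_periodic_norm {E F : Type*} [NormedAddCommGroup E]
    [NormedSpace ℝ E] [FiniteDimensional ℝ E] [SeminormedAddCommGroup F]
    (L : Submodule ℤ E) [DiscreteTopology L] [IsZLattice ℝ L] {f : E → F} (hf : Continuous f)
    (hper : ∀ v ∈ L, Periodic (fun z => ‖f z‖) v) : IsBounded (Set.range f) := by
  obtain ⟨C, hC⟩ := (IsZLattice.isCompact_range_of_periodic L _ hf.norm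
    fun z v hv => hper v hv z).bddAbove
  exact isBounded_iff_forall_norm_le.2 ⟨C, by rintro _ ⟨z, rfl⟩; exact hC ⟨z, rfl⟩⟩

namespace PeriodPair

variable (P : PeriodPair)

lemma periodic_of_mem_lattice {β : Type*} {g : ℂ → β} (h₁ : Periodic g P.ω₁)
    (h₂ : Periodic g P.ω₂) {v : ℂ} (hv : v ∈ P.lattice) : Periodic g v := by
  obtain ⟨m, n, rfl⟩ := mem_lattice.1 hv
  exact (h₁.int_mul m).add_period (h₂.int_mul n)

lemma differentiable_of_differentiableOn_compl_lattice {E : Type*} [NormedAddCommGroup E]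
    [NormedSpace ℂ E] [CompleteSpace E] {f : ℂ → E}
    (hf : DifferentiableOn ℂ f (P.lattice : Set ℂ)ᶜ)
    (hc : ∀ v ∈ P.lattice, ContinuousAt f v) : Differentiable ℂ f := by
  have hopen : IsOpen (P.lattice : Set ℂ)ᶜ := P.isClosed_lattice.isOpen_compl
  intro z
  by_cases hz : z ∈ P.lattice
  · refine (Complex.analyticAt_of_differentiable_on_punctured_nhds_of_continuousAt ?_
      (hc z hz)).differentiableAt
    rw [eventually_nhdsWithin_iff]
    filter_upwards [P.compl_lattice_sdiff_singleton_mem_nhds z] with w hw hne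
    exact hf.differentiableAt (hopen.mem_nhds fun h => hw ⟨h, hne⟩)
  · exact hf.differentiableAt (hopen.mem_nhds hz)

end PeriodPair

lemma exists_periodPair_lattice_eq {ω₁ ω₃ : ℂ} (hind : LinearIndependent ℝ ![ω₁, ω₃]) :
    ∃ P : PeriodPair, P.ω₁ = 2 * ω₁ ∧ P.ω₂ = 2 * ω₃ ∧ lattice ω₁ ω₃ = P.lattice := by
  have hind₂ : LinearIndependent ℝ ![2 * ω₁, 2 * ω₃] := by
    rw [LinearIndependent.pair_iff] at hind ⊢
    intro s t h
    simpa using hind (2 * s) (2 * t) (by rw [← h]; simp only [Complex.real_smul]; push_cast; ring)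
  refine ⟨⟨_, _, hind₂⟩, rfl, rfl, Set.ext fun z => ?_⟩
  simp only [lattice, Set.mem_ofPred_eq, SetLike.mem_coe, PeriodPair.mem_lattice]
  refine exists₂_congr fun m n => ⟨fun h => ?_, fun h => ?_⟩ <;> linear_combination -h

/-- Lemma 1, part (i): if `X ∈ W₀` and `X(z) → 0` as `z → 0` along `ℂ ∖ Λ`,
then `X` vanishes identically on `ℂ ∖ Λ`. -/
theorem W0_ker_trivial (ω₁ ω₃ : ℂ)
    (hind : LinearIndependent ℝ ![ω₁, ω₃])
    (X : ℂ → Matrix (Fin 2) (Fin 2) ℂ) (hX : X ∈ W0 ω₁ ω₃)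
    (hlim : Tendsto X (𝓝[(lattice ω₁ ω₃)ᶜ] 0) (𝓝 0)) :
    ∀ z ∈ (lattice ω₁ ω₃)ᶜ, X z = 0 := by
  have : CompleteSpace (Matrix (Fin 2) (Fin 2) ℂ) := FiniteDimensional.complete ℂ _
  obtain ⟨hdiff, hper₁, -, hper₃⟩ := hX
  obtain ⟨P, hP₁, hP₂, hΛ⟩ := exists_periodPair_lattice_eq hind
  rw [← hP₁, hΛ] at hper₁
  rw [← hP₂, hΛ] at hper₃
  rw [hΛ] at hdiff hlim ⊢
  set Y := (P.lattice : Set ℂ)ᶜ.indicator X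
  have hY_lattice : ∀ v ∈ P.lattice, Y v = 0 := fun v hv =>
    Set.indicator_of_notMem (Set.notMem_compl_iff.2 hv) X
  have hY_per : ∀ v ∈ P.lattice, Periodic (‖Y ·‖) v := fun v => P.periodic_of_mem_lattice
    (Periodic.norm_indicator_compl P.ω₁_mem_lattice fun z hz => by
      rw [hper₁ z hz, norm_σ1_mul_mul_σ1])
    (Periodic.norm_indicator_compl P.ω₂_mem_lattice fun z hz => by
      rw [hper₃ z hz, norm_σ3_mul_mul_σ3])
  have hY_cont : ∀ v ∈ P.lattice, ContinuousAt Y v := fun v hv => by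
    rw [ContinuousAt, hY_lattice v hv]
    exact (hY_per v hv).tendsto_zero_of_norm (tendsto_indicator_compl_nhds_zero hlim)
  have hY_entire : Differentiable ℂ Y := P.differentiable_of_differentiableOn_compl_lattice
    (hdiff.congr fun z hz => Set.indicator_of_mem hz X) hY_cont
  have hY_bdd : IsBounded (Set.range Y) :=
    IsZLattice.isBounded_range_of_periodic_norm P.lattice hY_entire.continuous hY_per
  intro z hz
  calc X z = Y z := (Set.indicator_of_mem hz X).symm
    _ = Y 0 := hY_entire.apply_eq_apply_of_bounded hY_bdd z 0
    _ = 0 := hY_lattice 0 (zero_mem _)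
end
end
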